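/- Let G be a temporal graph with destination vertex z and let P = (({v_{i-1},v_i},t_i))_{i=1}^k be a temporal s-z path in G of length k (with the convention t_{k+1} := t_k), and suppose d(s,1) < ∞. Then for all indices 0 ≤ f ≤ n ≤ k: n − f ≤ (k − d(s,1)) + d(v_f, t_{f+1}) − d(v_n, t_{n+1}) (all distances appearing here are finite). -/

import Mathlib

attribute [local instance] Classical.propDecidable

noncomputable section

/-- A temporal graph: a lifetime `tau` and, for each time step, a set of
undirected edges (unordered pairs of distinct vertices) over `V`;
edges exist only at time steps in `[1, tau]`. -/
structure TemporalGraph (V : Type*) where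
  tau : ℕ
  E : ℕ → Sym2 V → Prop
  time_mem : ∀ t e, E t e → 1 ≤ t ∧ t ≤ tau
  not_diag : ∀ t e, E t e → ¬ e.IsDiag

namespace TemporalGraph

variable {V : Type*}

/-- `G.IsPath s z m vs ts` : the sequence `(({vs (i-1), vs i}, ts i))_{i=1}^m` is a
temporal `s`-`z` path of length `m` in `G` (pairwise distinct vertices
`vs 0 = s, vs 1, …, vs m = z` and nondecreasing time stamps). -/
def IsPath (G : TemporalGraph V) (s z : V) (m : ℕ) (vs : ℕ → V) (ts : ℕ → ℕ) : Prop :=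
  vs 0 = s ∧ vs m = z ∧
  (∀ i j, i ≤ m → j ≤ m → i ≠ j → vs i ≠ vs j) ∧
  (∀ i, 1 ≤ i → i ≤ m → G.E (ts i) s(vs (i - 1), vs i)) ∧
  (∀ i, 1 ≤ i → i + 1 ≤ m → ts i ≤ ts (i + 1))

/-- `δ`-restless temporal path: consecutive time-edges are at most `δ` time steps apart. -/
def IsRestlessPath (G : TemporalGraph V) (δ : ℕ) (s z : V) (m : ℕ) (vs : ℕ → V)
    (ts : ℕ → ℕ) : Prop :=
  G.IsPath s z m vs ts ∧ ∀ i, 1 ≤ i → i + 1 ≤ m → ts (i + 1) ≤ ts i + δ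

/-- temporal `s`-`z` walk (vertices may repeat). -/
def IsWalk (G : TemporalGraph V) (s z : V) (m : ℕ) (vs : ℕ → V) (ts : ℕ → ℕ) : Prop :=
  vs 0 = s ∧ vs m = z ∧
  (∀ i, 1 ≤ i → i ≤ m → G.E (ts i) s(vs (i - 1), vs i)) ∧
  (∀ i, 1 ≤ i → i + 1 ≤ m → ts i ≤ ts (i + 1))

/-- `δ`-restless temporal walk. -/
def IsRestlessWalk (G : TemporalGraph V) (δ : ℕ) (s z : V) (m : ℕ) (vs : ℕ → V)
    (ts : ℕ → ℕ) : Prop :=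
  G.IsWalk s z m vs ts ∧ ∀ i, 1 ≤ i → i + 1 ≤ m → ts (i + 1) ≤ ts i + δ

/-- `G.dist z v t` : the minimum length of a temporal `v`-`z` path in `G` whose
departure time is at least `t`; `⊤` if no such path exists, and `0` for `v = z`. -/
def dist (G : TemporalGraph V) (z v : V) (t : ℕ) : ℕ∞ :=
  if v = z then 0
  else sInf {x : ℕ∞ | ∃ (m : ℕ) (vs : ℕ → V) (ts : ℕ → ℕ),
    G.IsPath v z m vs ts ∧ t ≤ ts 1 ∧ x = (m : ℕ∞)}

/-- The set `A_{a,t}^{b,t'}` of vertex appearances. -/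
def AreaAB (G : TemporalGraph V) (z a : V) (t : ℕ) (b : V) (t' : ℕ) : Set (V × ℕ) :=
  {w | G.dist z b t' < G.dist z w.1 w.2 ∧ G.dist z w.1 w.2 < G.dist z a t ∧
       t ≤ w.2 ∧ w.2 ≤ t'}

/-- The set `A^{b,t'}` of vertex appearances. -/
def AreaB (G : TemporalGraph V) (z b : V) (t' : ℕ) : Set (V × ℕ) :=
  {w | G.dist z b t' < G.dist z w.1 w.2 ∧ G.dist z w.1 w.2 < ⊤ ∧ w.2 ≤ t'}

/-- The temporal graph `G_{a,t}^{b,t'}`. -/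
def SubAB (G : TemporalGraph V) (z : V) (δ : ℕ) (a : V) (t : ℕ) (b : V) (t' : ℕ) :
    TemporalGraph V where
  tau := G.tau
  E := fun u e =>
    (G.E u e ∧ ∃ x y, e = s(x, y) ∧ (x, u) ∈ G.AreaAB z a t b t' ∧
        (y, u) ∈ G.AreaAB z a t b t') ∨
    (G.E u e ∧ u = t ∧ ∃ x, e = s(a, x) ∧ (x, t) ∈ G.AreaAB z a t b t') ∨
    (G.E u e ∧ t' ≤ u + δ ∧ ∃ x, e = s(x, b) ∧
        ((x, u) ∈ G.AreaAB z a t b t' ∨ (x = a ∧ u = t)))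
  time_mem := by rintro u e (⟨h, -⟩ | ⟨h, -⟩ | ⟨h, -⟩) <;> exact G.time_mem u e h
  not_diag := by rintro u e (⟨h, -⟩ | ⟨h, -⟩ | ⟨h, -⟩) <;> exact G.not_diag u e h

/-- The temporal graph `G^{b,t'}`. -/
def SubB (G : TemporalGraph V) (z : V) (δ : ℕ) (b : V) (t' : ℕ) : TemporalGraph V where
  tau := G.tau
  E := fun u e =>
    (G.E u e ∧ ∃ x y, e = s(x, y) ∧ (x, u) ∈ G.AreaB z b t' ∧ (y, u) ∈ G.AreaB z b t') ∨
    (G.E u e ∧ t' ≤ u + δ ∧ ∃ x, e = s(x, b) ∧ (x, u) ∈ G.AreaB z b t')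
  time_mem := by rintro u e (⟨h, -⟩ | ⟨h, -⟩) <;> exact G.time_mem u e h
  not_diag := by rintro u e (⟨h, -⟩ | ⟨h, -⟩) <;> exact G.not_diag u e h

/-- The vertex set of a temporal graph: all endpoints of its time-edges. -/
def vertexSet (G : TemporalGraph V) : Set V := {x | ∃ u e, G.E u e ∧ x ∈ e}

/-- Minimum length of a `δ`-restless temporal `a`-`b` path in `G` (`⊤` if none). -/
def restlessDist (G : TemporalGraph V) (δ : ℕ) (a b : V) : ℕ∞ :=
  sInf {x : ℕ∞ | ∃ m vs ts, G.IsRestlessPath δ a b m vs ts ∧ x = (m : ℕ∞)}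

/-- The base case of the table `T`: the value `T[u,t']` when `d(s,1) - d(u,t') ≤ ℓ`. -/
def tableBase (G : TemporalGraph V) (s z : V) (δ ℓ : ℕ) (u : V) (t' : ℕ) : ℕ∞ :=
  if u = s then 0
  else if 1 ≤ restlessDist (G.SubB z δ u t') δ s u ∧
          restlessDist (G.SubB z δ u t') δ s u ≤ (2 * ℓ : ℕ)
    then restlessDist (G.SubB z δ u t') δ s u
    else ⊤

/-- Fuelled version of the recursively defined table `T` (the fuel is an upper
bound on the recursion depth, which strictly decreases along the recursion of
the table via `d(s,1) - d(·,·)`). -/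
def tableFuel (G : TemporalGraph V) (s z : V) (δ ℓ : ℕ) : ℕ → V → ℕ → ℕ∞
  | 0, u, t' => tableBase G s z δ ℓ u t'
  | n + 1, u, t' =>
    if G.dist z s 1 - G.dist z u t' ≤ (ℓ : ℕ∞) then tableBase G s z δ ℓ u t'
    else sInf (insert ⊤ {x : ℕ∞ | ∃ (v : V) (t ℓ' : ℕ),
      1 ≤ t ∧ t ≤ t' ∧ (∃ e, G.E t e ∧ v ∈ e) ∧
      G.dist z u t' < G.dist z v t ∧ G.dist z v t ≤ G.dist z u t' + (ℓ : ℕ∞) + 1 ∧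
      1 ≤ ℓ' ∧ ℓ' ≤ 2 * ℓ + 1 ∧
      restlessDist (G.SubAB z δ v t u t') δ v u = (ℓ' : ℕ∞) ∧
      x = tableFuel G s z δ ℓ n v t + (ℓ' : ℕ∞)})

/-- The table `T` of the dynamic program, for the instance `(G,s,z,δ,k)`
(with `ℓ := k - d(s,1)`). -/
def table (G : TemporalGraph V) (s z : V) (δ k : ℕ) (u : V) (t' : ℕ) : ℕ∞ :=
  tableFuel G s z δ (k - (G.dist z s 1).toNat) ((G.dist z s 1).toNat + 1) u t'

/-- `vs i` is a distance separator of the temporal `s`-`z` path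
`(({vs (i-1), vs i}, ts i))_{i=1}^k` (with the convention `ts (k+1) = ts k`). -/
def IsDistSep (G : TemporalGraph V) (z : V) (k : ℕ) (vs : ℕ → V) (ts : ℕ → ℕ)
    (i : ℕ) : Prop :=
  (∀ j, j < i → G.dist z (vs i) (ts (i + 1)) < G.dist z (vs j) (ts (j + 1))) ∧
  (∀ j, i < j → j ≤ k → G.dist z (vs j) (ts (j + 1)) < G.dist z (vs i) (ts (i + 1)))

/-- The underlying (static) graph of a temporal graph. -/
def underlying (G : TemporalGraph V) : SimpleGraph V where
  Adj x y := ∃ t, G.E t s(x, y)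
  symm := by
    constructor
    rintro x y ⟨t, h⟩
    exact ⟨t, by rwa [Sym2.eq_swap]⟩
  loopless := by
    constructor
    rintro x ⟨t, h⟩
    exact G.not_diag t _ h (by simp)

/-- The set of non-isolated vertex appearances of `G`. -/
def NonIsolated (G : TemporalGraph V) : Set (V × ℕ) := {p | ∃ e, G.E p.2 e ∧ p.1 ∈ e}

/-- The weighted arcs of the auxiliary directed graph `D` (for destination `z`):
`DArc G z x y w` means there is an arc from `x` to `y` of weight `w`.
`Sum.inl ()` is the special vertex `z` of `D`; `Sum.inr (v, t)` is the vertex `v_t`. -/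
def DArc (G : TemporalGraph V) (z : V) : Unit ⊕ V × ℕ → Unit ⊕ V × ℕ → ℕ → Prop
  | Sum.inr (v, ta), Sum.inr (u, tb), w =>
      (w = 1 ∧ ta = tb ∧ v ≠ u ∧ G.E ta s(v, u)) ∨
      (w = 0 ∧ v = u ∧ (v, ta) ∈ G.NonIsolated ∧ (v, tb) ∈ G.NonIsolated ∧ tb < ta ∧
        ∀ t'', tb < t'' → t'' < ta → (v, t'') ∉ G.NonIsolated)
  | Sum.inl _, Sum.inr (u, tb), w =>
      w = 0 ∧ u = z ∧ (z, tb) ∈ G.NonIsolated ∧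
        ∀ t'', (z, t'') ∈ G.NonIsolated → t'' ≤ tb
  | _, _, _ => False

/-- The minimum total arc weight of a directed path in `D` from the special
vertex `z` to the vertex `v_t` (`⊤` if `v_t` is not reachable from `z`). -/
def dMinWeight (G : TemporalGraph V) (z v : V) (t : ℕ) : ℕ∞ :=
  sInf {x : ℕ∞ | ∃ (n : ℕ) (w : ℕ → Unit ⊕ V × ℕ) (wt : ℕ → ℕ),
    w 0 = Sum.inl () ∧ w n = Sum.inr (v, t) ∧
    (∀ i j, i ≤ n → j ≤ n → i ≠ j → w i ≠ w j) ∧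
    (∀ i, i < n → DArc G z (w i) (w (i + 1)) (wt i)) ∧
    x = ∑ i ∈ Finset.range n, (wt i : ℕ∞)}

end TemporalGraph

/-!
Write `d_i` for the distance `d(v_i, t_{i+1})` from the `i`-th vertex of the path. The suffix of
the path starting at `v_i` is itself a temporal path departing at `t_{i+1}`, so `d_i ≤ k - i`.
Conversely, a shortest path from `v_{i+1}` can be extended by the edge `{v_i, v_{i+1}}` (shortcut
at `v_i` if it already passes through `v_i`), so `d_i ≤ d_{i+1} + 1`, and hence
`d(s, 1) ≤ f + d_f`. Adding the two bounds gives the inequality.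
-/

namespace TemporalGraph

variable {V : Type*} {G : TemporalGraph V} {z : V}

@[simp]
lemma dist_self (t : ℕ) : G.dist z z t = 0 := by
  simp [dist]

lemma dist_mono (v : V) : Monotone (G.dist z v) := by
  intro t t' h
  unfold dist
  split
  · exact le_rfl
  · refine sInf_le_sInf ?_
    rintro x ⟨m, vs, ts, hP, hdep, rfl⟩
    exact ⟨m, vs, ts, hP, h.trans hdep, rfl⟩

lemma dist_le_of_isPath {v : V} {m t : ℕ} {vs : ℕ → V} {ts : ℕ → ℕ}
    (hP : G.IsPath v z m vs ts) (ht : t ≤ ts 1) : G.dist z v t ≤ m := by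
  unfold dist
  split
  · exact bot_le
  · exact sInf_le ⟨m, vs, ts, hP, ht, rfl⟩

lemma exists_isPath_length_eq_dist {v : V} {t : ℕ} (h : G.dist z v t ≠ ⊤) :
    ∃ m vs ts, G.IsPath v z m vs ts ∧ t ≤ ts 1 ∧ G.dist z v t = m := by
  by_cases hvz : v = z
  · subst hvz
    refine ⟨0, fun _ => v, fun _ => t, ⟨rfl, rfl, ?_, ?_, ?_⟩, le_rfl, by simp⟩ <;>
      intros <;> omega
  rw [dist, if_neg hvz] at h ⊢
  obtain ⟨_, hx, -⟩ := sInf_lt_iff.mp (lt_top_iff_ne_top.mpr h)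
  exact csInf_mem ⟨_, hx⟩

namespace IsPath

variable {v : V} {m : ℕ} {vs : ℕ → V} {ts : ℕ → ℕ}

lemma ts_mono (hP : G.IsPath v z m vs ts) {i j : ℕ} (hi : 1 ≤ i) (hij : i ≤ j)
    (hj : j ≤ m) : ts i ≤ ts j := by
  induction j, hij using Nat.le_induction with
  | base => exact le_rfl
  | succ j hij ih => exact (ih (by omega)).trans (hP.2.2.2.2 j (by omega) hj)

lemma suffix (hP : G.IsPath v z m vs ts) {j : ℕ} (hj : j ≤ m) :
    G.IsPath (vs j) z (m - j) (fun i => vs (j + i)) (fun i => ts (j + i)) := by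
  obtain ⟨-, hend, hinj, hedge, hmono⟩ := hP
  refine ⟨rfl, by simpa only [Nat.add_sub_cancel' hj] using hend, ?_, ?_, ?_⟩
  · intro a b ha hb hab
    exact hinj _ _ (by omega) (by omega) (by omega)
  · intro i hi1 him
    simpa only [show j + i - 1 = j + (i - 1) by omega] using hedge (j + i) (by omega) (by omega)
  · intro i hi1 him
    exact hmono (j + i) (by omega) (by omega)

lemma cons (hP : G.IsPath v z m vs ts) {u : V} {t : ℕ} (he : G.E t s(u, v))
    (ht : t ≤ ts 1) (hu : ∀ j ≤ m, vs j ≠ u) :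
    G.IsPath u z (m + 1) (fun i => if i = 0 then u else vs (i - 1))
      (fun i => if i ≤ 1 then t else ts (i - 1)) := by
  obtain ⟨hstart, hend, hinj, hedge, hmono⟩ := hP
  refine ⟨rfl, by simpa using hend, ?_, ?_, ?_⟩
  · intro i j hi hj hij
    rcases Nat.eq_zero_or_pos i with rfl | hi0 <;> rcases Nat.eq_zero_or_pos j with rfl | hj0
    · exact absurd rfl hij
    · simpa [hj0.ne'] using (hu (j - 1) (by omega)).symm
    · simpa [hi0.ne'] using hu (i - 1) (by omega)
    · simpa [hi0.ne', hj0.ne'] using hinj _ _ (by omega) (by omega) (by omega)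
  · intro i hi1 him
    rcases Nat.eq_or_lt_of_le hi1 with rfl | hi2
    · simpa [hstart] using he
    · simpa [show ¬i ≤ 1 by omega, show i ≠ 0 by omega, show i - 1 ≠ 0 by omega] using
        hedge (i - 1) (by omega) (by omega)
  · intro i hi1 him
    rcases Nat.eq_or_lt_of_le hi1 with rfl | hi2
    · simpa using ht
    · simpa [show ¬i ≤ 1 by omega, show i ≠ 0 by omega, show i - 1 + 1 = i by omega] using
        hmono (i - 1) (by omega) (by omega)

end IsPath

lemma dist_le_dist_add_one {u v : V} {t t' : ℕ} (he : G.E t s(u, v)) (htt' : t ≤ t') :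
    G.dist z u t ≤ G.dist z v t' + 1 := by
  by_cases huz : u = z
  · simp [huz]
  by_cases htop : G.dist z v t' = ⊤
  · simp [htop]
  obtain ⟨m, vs, ts, hP, hdep, hm⟩ := exists_isPath_length_eq_dist htop
  rw [hm]
  by_cases hu : ∃ j ≤ m, vs j = u
  · obtain ⟨j, hjm, rfl⟩ := hu
    have hjm' : j < m := lt_of_le_of_ne hjm fun h => huz (h ▸ hP.2.1)
    have hdep' : t ≤ ts (j + 1) := htt'.trans (hdep.trans (hP.ts_mono le_rfl (by omega) hjm'))
    calc G.dist z (vs j) t ≤ ((m - j : ℕ) : ℕ∞) := dist_le_of_isPath (hP.suffix hjm) hdep'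
      _ ≤ m + 1 := by norm_cast; omega
  · push Not at hu
    exact_mod_cast dist_le_of_isPath (hP.cons he (htt'.trans hdep) hu) (by simp)

namespace IsPath

variable {s : V} {k : ℕ} {vs : ℕ → V} {ts : ℕ → ℕ}

lemma dist_le_sub (hP : G.IsPath s z k vs ts) {i : ℕ} (hi : i ≤ k) :
    G.dist z (vs i) (ts (i + 1)) ≤ (k - i : ℕ) :=
  dist_le_of_isPath (hP.suffix hi) (by simp)

lemma dist_le_add_dist (hP : G.IsPath s z k vs ts) {i : ℕ} (hi : i ≤ k) :
    G.dist z s 1 ≤ i + G.dist z (vs i) (ts (i + 1)) := by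
  induction i with
  | zero =>
    rw [Nat.cast_zero, zero_add, ← hP.1]
    rcases Nat.eq_zero_or_pos k with rfl | hk
    · simp [hP.2.1]
    · exact dist_mono _ (G.time_mem _ _ (hP.2.2.2.1 1 le_rfl hk)).1
  | succ i ih =>
    have he : G.E (ts (i + 1)) s(vs i, vs (i + 1)) := by
      simpa using hP.2.2.2.1 (i + 1) (by omega) hi
    -- at the last vertex `z` the departure time is irrelevant
    have hnext : G.dist z (vs (i + 1)) (ts (i + 1)) ≤ G.dist z (vs (i + 1)) (ts (i + 1 + 1)) := by
      rcases Nat.eq_or_lt_of_le hi with rfl | hlt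
      · simp [hP.2.1]
      · exact dist_mono _ (hP.2.2.2.2 (i + 1) (by omega) hlt)
    calc G.dist z s 1 ≤ i + G.dist z (vs i) (ts (i + 1)) := ih (by omega)
      _ ≤ i + (G.dist z (vs (i + 1)) (ts (i + 1 + 1)) + 1) :=
        add_le_add le_rfl ((dist_le_dist_add_one he le_rfl).trans (add_le_add hnext le_rfl))
      _ = ((i + 1 : ℕ) : ℕ∞) + G.dist z (vs (i + 1)) (ts (i + 1 + 1)) := by push_cast; ring

end IsPath

end TemporalGraph

open TemporalGraph

theorem statement17_general {V : Type*} (G : TemporalGraph V) (z s : V) (k : ℕ)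
    (vs : ℕ → V) (ts : ℕ → ℕ)
    (hP : G.IsPath s z k vs ts) :
    ∀ f n, f ≤ n → n ≤ k →
      G.dist z (vs f) (ts (f + 1)) ≠ ⊤ ∧ G.dist z (vs n) (ts (n + 1)) ≠ ⊤ ∧
      (n : ℤ) - (f : ℤ) ≤
        ((k : ℤ) - ((G.dist z s 1).toNat : ℤ)) +
          ((G.dist z (vs f) (ts (f + 1))).toNat : ℤ) -
          ((G.dist z (vs n) (ts (n + 1))).toNat : ℤ) := by
  intro f n hfn hnk
  have hprefix := hP.dist_le_add_dist (hfn.trans hnk)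
  have hsuffix := hP.dist_le_sub hnk
  lift G.dist z (vs f) (ts (f + 1)) to ℕ
    using ne_top_of_le_ne_top (ENat.natCast_ne_top _) (hP.dist_le_sub (hfn.trans hnk)) with df
  lift G.dist z (vs n) (ts (n + 1)) to ℕ
    using ne_top_of_le_ne_top (ENat.natCast_ne_top _) hsuffix with dn
  lift G.dist z s 1 to ℕ using ne_top_of_le_ne_top (ENat.natCast_ne_top _) hprefix with ds
  norm_cast at hprefix hsuffix
  simp only [ENat.toNat_natCast]
  exact ⟨ENat.natCast_ne_top _, ENat.natCast_ne_top _, by omega⟩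

/-- Along a temporal `s`-`z` path of length `k` (with the
convention `t_{k+1} := t_k`) and `d(s,1) < ∞`: for all `0 ≤ f ≤ n ≤ k`, all
occurring distances are finite and
`n - f ≤ (k - d(s,1)) + d(v_f, t_{f+1}) - d(v_n, t_{n+1})`. -/
theorem statement17 {V : Type*} (G : TemporalGraph V) (z s : V) (k : ℕ)
    (vs : ℕ → V) (ts : ℕ → ℕ)
    (hP : G.IsPath s z k vs ts) (hconv : ts (k + 1) = ts k)
    (hfin : G.dist z s 1 ≠ ⊤) :
    ∀ f n, f ≤ n → n ≤ k →
      G.dist z (vs f) (ts (f + 1)) ≠ ⊤ ∧ G.dist z (vs n) (ts (n + 1)) ≠ ⊤ ∧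
      (n : ℤ) - (f : ℤ) ≤
        ((k : ℤ) - ((G.dist z s 1).toNat : ℤ)) +
          ((G.dist z (vs f) (ts (f + 1))).toNat : ℤ) -
          ((G.dist z (vs n) (ts (n + 1))).toNat : ℤ) :=
  statement17_general G z s k vs ts hP
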